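/- arXiv:1908.01976 — 5 statements merged into one kernel-verified Lean document; each statement's English description precedes it below -/
import Mathlib

section
/- Let n, n_i, L be positive integers with n_i ≤ n, n dividing L, and n_i dividing L. Let H be a subset of {1,...,n} such that the map h ↦ ⌈n_i·h/n⌉ is a bijection from H onto {1,...,n_i}. Let h_1,...,h_{n_i} be any enumeration of H, and for each s ∈ {1,...,n_i} let m_s = L·h_s/n, let ε_s be a real with 0 < ε_s < 1, and let d_s = (m_s − ε_s)/L. Then for every k ∈ {1,...,n_i} there is exactly one index s ∈ {1,...,n_i} such that d_s lies in the interval ((k−1)/n_i, k/n_i]. (Theorem 1(ii): each slice of the constructed FSLHD is a Latin hypercube column.) -/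
/-!
Write `L = n a = nᵢ b`. Then `nᵢ d_s = (a h_s - ε_s) / b`, which lies in the half-open interval
of length `1 / b` ending at `nᵢ h_s / n = a h_s / b`. A number with denominator `b` and every
point of that interval have the same ceiling, so `d_s` falls in the `k`-th cell of width `1 / nᵢ`
exactly when `⌈nᵢ h_s / n⌉ = k`; the bijectivity hypothesis on `H` finishes the proof.
-/

open Function Set

section Ceil

variable {K : Type*} [Field K] [LinearOrder K] [IsStrictOrderedRing K] [FloorRing K]

theorem Int.ceil_eq_ceil_div_of_mem_Ioc {b : ℕ} (hb : 0 < b) (m : ℤ) {y : K}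
    (hy : y ∈ Ioc (((m : K) - 1) / b) ((m : K) / b)) : ⌈y⌉ = ⌈(m : K) / b⌉ := by
  have hbK : (0 : K) < b := by exact_mod_cast hb
  rw [Int.ceil_eq_iff]
  refine ⟨?_, hy.2.trans (Int.le_ceil _)⟩
  have hlt : (⌈(m : K) / b⌉ - 1) * (b : ℤ) < m := by
    have := Int.ceil_lt_add_one ((m : K) / b)
    rw [← sub_lt_iff_lt_add, lt_div_iff₀ hbK] at this
    exact_mod_cast this
  have hle : ((⌈(m : K) / b⌉ : K) - 1) * b ≤ m - 1 := by exact_mod_cast Int.le_sub_one_of_lt hlt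
  exact ((le_div_iff₀ hbK).2 hle).trans_lt hy.1

theorem Int.ceil_mul_eq_iff {N : K} (hN : 0 < N) (d : K) (k : ℤ) :
    ⌈N * d⌉ = k ↔ ((k : K) - 1) / N < d ∧ d ≤ (k : K) / N := by
  rw [Int.ceil_eq_iff, div_lt_iff₀' hN, le_div_iff₀' hN]

end Ceil

theorem Set.BijOn.existsUnique_comp {ι α β : Type*} {f : α → β} {s : Set α} {t : Set β}
    (hf : BijOn f s t) {e : ι → α} (he : Injective e) (hmem : ∀ i, e i ∈ s)
    (hsurj : ∀ x ∈ s, ∃ i, e i = x) {y : β} (hy : y ∈ t) : ∃! i, f (e i) = y := by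
  obtain ⟨x, hx, rfl⟩ := hf.surjOn hy
  obtain ⟨i, rfl⟩ := hsurj x hx
  exact ⟨i, rfl, fun j hj => he (hf.injOn (hmem j) (hmem i) hj)⟩

theorem ceil_mul_sub_div_eq_ceil_div {n ni L : ℕ} (hn : 0 < n) (hni : 0 < ni) (hL : 0 < L)
    (hnL : n ∣ L) (hniL : ni ∣ L) (x : ℕ) {ε : ℝ} (hε : 0 < ε ∧ ε < 1) :
    ⌈(ni : ℝ) * (((L : ℝ) * x / n - ε) / L)⌉ = ⌈(ni * x : ℚ) / n⌉ := by
  obtain ⟨a, rfl⟩ := hnL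
  obtain ⟨b, hb⟩ := hniL
  have hb0 : 0 < b := Nat.pos_of_mul_pos_left (hb ▸ hL)
  have hnR : (0 : ℝ) < n := by exact_mod_cast hn
  have hniR : (0 : ℝ) < ni := by exact_mod_cast hni
  have hbR : (0 : ℝ) < b := by exact_mod_cast hb0
  have hnab : (n : ℝ) * a = ni * b := by exact_mod_cast hb
  have hratio : (ni * x : ℝ) / n = ((a * x : ℤ) : ℝ) / b := by
    rw [div_eq_div_iff hnR.ne' hbR.ne']
    push_cast
    linear_combination (-(x : ℝ)) * hnab
  have hd : (ni : ℝ) * ((((n * a : ℕ) : ℝ) * x / n - ε) / ((n * a : ℕ) : ℝ)) =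
      (((a * x : ℤ) : ℝ) - ε) / b := by
    push_cast
    rw [hnab, mul_div_assoc', div_eq_div_iff (by positivity) hbR.ne']
    field_simp
    linear_combination (-(x : ℝ)) * hnab
  have hceil := Int.ceil_eq_ceil_div_of_mem_Ioc hb0 (a * x) (y := (((a * x : ℤ) : ℝ) - ε) / b)
    ⟨by gcongr; linarith [hε.2], by gcongr; linarith [hε.1]⟩
  rw [← Rat.ceil_cast (α := ℝ), hd, hceil, ← hratio]
  push_cast
  rfl

theorem fslhd_slice_lhd_general (n ni L : ℕ) (hn : 0 < n) (hni : 0 < ni) (hL : 0 < L)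
    (hdvd : n ∣ L) (hdvdi : ni ∣ L)
    (H : Finset ℕ)
    (hbij : Set.BijOn (fun x : ℕ => ⌈(ni * x : ℚ) / n⌉) ↑H (Set.Icc 1 (ni : ℤ)))
    (h : Fin ni → ℕ) (hinj : Function.Injective h)
    (hmem : ∀ s, h s ∈ H) (hsurj : ∀ x ∈ H, ∃ s, h s = x)
    (ε : Fin ni → ℝ) (hε : ∀ s, 0 < ε s ∧ ε s < 1)
    (d : Fin ni → ℝ)
    (hd : ∀ s, d s = ((L : ℝ) * (h s : ℝ) / n - ε s) / L) :
    ∀ k ∈ Finset.Icc 1 ni, ∃! s : Fin ni,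
      ((k : ℝ) - 1) / ni < d s ∧ d s ≤ (k : ℝ) / ni := by
  intro k hk
  have hniR : (0 : ℝ) < ni := by exact_mod_cast hni
  have hcell : ∀ s, (((k : ℝ) - 1) / ni < d s ∧ d s ≤ (k : ℝ) / ni) ↔
      ⌈(ni * h s : ℚ) / n⌉ = k := fun s => by
    rw [← ceil_mul_sub_div_eq_ceil_div hn hni hL hdvd hdvdi (h s) (hε s), ← hd s,
      Int.ceil_mul_eq_iff hniR]
    push_cast
    rfl
  simp only [hcell]
  rw [Finset.mem_Icc] at hk
  exact hbij.existsUnique_comp hinj hmem hsurj (by simp only [mem_Icc]; omega)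

/-- Theorem 1(ii): each slice of the constructed FSLHD is a Latin hypercube
column. -/
theorem fslhd_slice_lhd (n ni L : ℕ) (hn : 0 < n) (hni : 0 < ni) (hL : 0 < L)
    (hle : ni ≤ n) (hdvd : n ∣ L) (hdvdi : ni ∣ L)
    (H : Finset ℕ) (hH : H ⊆ Finset.Icc 1 n)
    (hbij : Set.BijOn (fun x : ℕ => ⌈(ni * x : ℚ) / n⌉) ↑H (Set.Icc 1 (ni : ℤ)))
    (h : Fin ni → ℕ) (hinj : Function.Injective h)
    (hmem : ∀ s, h s ∈ H) (hsurj : ∀ x ∈ H, ∃ s, h s = x)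
    (ε : Fin ni → ℝ) (hε : ∀ s, 0 < ε s ∧ ε s < 1)
    (d : Fin ni → ℝ)
    (hd : ∀ s, d s = ((L : ℝ) * (h s : ℝ) / n - ε s) / L) :
    ∀ k ∈ Finset.Icc 1 ni, ∃! s : Fin ni,
      ((k : ℝ) - 1) / ni < d s ∧ d s ≤ (k : ℝ) / ni :=
  fslhd_slice_lhd_general n ni L hn hni hL hdvd hdvdi H hbij h hinj hmem hsurj ε hε d hd
end

section
/- Let n and n_i be positive integers with n_i ≤ n. Then for every v ∈ {1,...,n_i} there is exactly one j ∈ {1,...,n} such that ⌈n_i·j/n⌉ = v and ⌈n_i·(j+1)/n⌉ = v + 1. -/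
/-!
Since `ni ≤ n`, the sequence `ni * j / n` grows by at most `1` per step, so its ceiling
reaches `v` and then `v + 1` at consecutive stages exactly when
`ni * j / n ≤ v < ni * (j + 1) / n`, that is, when `j = ⌊v * n / ni⌋`; and this index lies in
`[1, n]` because `1 ≤ v ≤ ni ≤ n`.
-/

theorem Int.ceil_eq_and_ceil_add_eq_add_one_iff {R : Type*} [Ring R] [LinearOrder R]
    [IsStrictOrderedRing R] [FloorRing R] {x d : R} {z : ℤ} (hd : d ≤ 1) :
    ⌈x⌉ = z ∧ ⌈x + d⌉ = z + 1 ↔ x ≤ z ∧ (z : R) < x + d := by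
  simp only [Int.ceil_eq_iff, Int.cast_add, Int.cast_one, add_sub_cancel_right]
  constructor
  · rintro ⟨⟨-, hx⟩, hxd, -⟩
    exact ⟨hx, hxd⟩
  · rintro ⟨hx, hxd⟩
    have hzx : (z : R) - 1 < x := sub_lt_iff_lt_add.mpr (hxd.trans_le (add_le_add_right hd x))
    exact ⟨⟨hzx, hx⟩, hxd, add_le_add hx hd⟩

theorem Nat.eq_div_iff_mul_le_and_lt_mul {a m j : ℕ} (ha : 0 < a) :
    j = m / a ↔ a * j ≤ m ∧ m < a * (j + 1) := by
  constructor
  · rintro rfl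
    exact ⟨Nat.mul_div_le m a, Nat.lt_mul_div_succ m ha⟩
  · rintro ⟨hle, hlt⟩
    exact (Nat.div_eq_of_lt_le (by rwa [mul_comm]) (by rwa [mul_comm])).symm

theorem ceil_mul_div_jump_iff {a n j v : ℕ} (hn : 0 < n) (han : a ≤ n) :
    ⌈(a * j : ℚ) / n⌉ = (v : ℤ) ∧ ⌈(a * (j + 1) : ℚ) / n⌉ = (v : ℤ) + 1 ↔
      a * j ≤ v * n ∧ v * n < a * (j + 1) := by
  have hnQ : (0 : ℚ) < n := by exact_mod_cast hn
  have hstep : (a : ℚ) / n ≤ 1 := (div_le_one hnQ).mpr (by exact_mod_cast han)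
  have hsucc : (a * (j + 1) : ℚ) / n = a * j / n + a / n := by ring
  rw [hsucc, Int.ceil_eq_and_ceil_add_eq_add_one_iff hstep, ← hsucc, Int.cast_natCast,
    div_le_iff₀ hnQ, lt_div_iff₀ hnQ]
  norm_cast

theorem mul_div_mem_Icc {a n v : ℕ} (hv : v ∈ Finset.Icc 1 a) (han : a ≤ n) :
    v * n / a ∈ Finset.Icc 1 n := by
  obtain ⟨hv1, hva⟩ := Finset.mem_Icc.mp hv
  have ha : 0 < a := by omega
  refine Finset.mem_Icc.mpr ⟨(Nat.one_le_div_iff ha).mpr ?_, Nat.div_le_of_le_mul ?_⟩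
  · exact han.trans (Nat.le_mul_of_pos_left n hv1)
  · exact Nat.mul_le_mul_right n hva

theorem unique_jump_stage_general (n ni : ℕ) (hle : ni ≤ n) :
    ∀ v ∈ Finset.Icc 1 ni, ∃! j : ℕ, j ∈ Finset.Icc 1 n ∧
      ⌈(ni * j : ℚ) / n⌉ = (v : ℤ) ∧ ⌈(ni * (j + 1) : ℚ) / n⌉ = (v : ℤ) + 1 := by
  intro v hv
  obtain ⟨hv1, hvni⟩ := Finset.mem_Icc.mp hv
  have hni : 0 < ni := Nat.lt_of_lt_of_le hv1 hvni
  simp_rw [ceil_mul_div_jump_iff (hni.trans_le hle) hle, ← Nat.eq_div_iff_mul_le_and_lt_mul hni]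
  exact ⟨v * n / ni, ⟨mul_div_mem_Icc hv hle, rfl⟩, fun j hj => hj.2⟩

/-- Each target level v ∈ {1,...,n_i} triggers exactly one stage j with a jump. -/
theorem unique_jump_stage (n ni : ℕ) (hn : 0 < n) (hni : 0 < ni) (hle : ni ≤ n) :
    ∀ v ∈ Finset.Icc 1 ni, ∃! j : ℕ, j ∈ Finset.Icc 1 n ∧
      ⌈(ni * j : ℚ) / n⌉ = (v : ℤ) ∧ ⌈(ni * (j + 1) : ℚ) / n⌉ = (v : ℤ) + 1 :=
  unique_jump_stage_general n ni hle
end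

section
/- Let u and n_1,...,n_u be positive integers and set n = n_1 + ··· + n_u. Then there exist pairwise disjoint subsets H^1,...,H^u of {1,...,n} whose union is all of {1,...,n}, such that for each i ∈ {1,...,u} the set H^i has cardinality n_i and the map h ↦ ⌈n_i·h/n⌉ is a bijection from H^i onto {1,...,n_i}. -/
/-!
The point of `H^i` carrying the value `j + 1` must lie in the integer interval
`{h | ⌈n_i h / n⌉ = j + 1}`; there are `n` such pairs `(i, j)` and `n` points, so we need a
system of distinct representatives for these intervals. For a family of integer intervals,
Hall's condition only has to be checked on windows `[a, b]`, and slice `i` has fewer than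
`(b + 2 - a) n_i / n` of its intervals inside `[a, b]`; summing over `i`, since the `n_i` add up
to `n`, at most `b + 1 - a` intervals fit in the window.
-/

open Finset

theorem Finset.exists_maximal_Icc_subset_of_mem {B : Finset ℕ} {y : ℕ} (hy : y ∈ B) :
    ∃ x ≤ y, Icc x y ⊆ B ∧ (0 < x → x - 1 ∉ B) := by
  have hex : ∃ x, Icc x y ⊆ B := ⟨y, by simpa using hy⟩
  refine ⟨Nat.find hex, Nat.find_min' hex (by simpa using hy), Nat.find_spec hex,
    fun hx hmem => Nat.find_min hex (Nat.sub_one_lt_of_lt hx) ?_⟩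
  intro z hz
  rcases eq_or_ne z (Nat.find hex - 1) with rfl | hne
  · exact hmem
  · exact Nat.find_spec hex (mem_Icc.2 ⟨by grind, (mem_Icc.1 hz).2⟩)

theorem Finset.subset_Icc_or_disjoint_of_ordConnected {T B : Finset ℕ}
    (hT : (T : Set ℕ).OrdConnected) (hTB : T ⊆ B) {x y : ℕ} (hy : ∀ b ∈ B, b ≤ y)
    (hx : 0 < x → x - 1 ∉ B) : T ⊆ Icc x y ∨ Disjoint T (Icc x y) := by
  by_contra! ⟨hsub, hdisj⟩
  obtain ⟨a, haT, haxy⟩ := not_subset.1 hsub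
  obtain ⟨c, hcT, hcxy⟩ := not_disjoint_iff.1 hdisj
  have hax : a < x := by
    by_contra!
    exact haxy (mem_Icc.2 ⟨this, hy a (hTB haT)⟩)
  have hxc := (mem_Icc.1 hcxy).1
  exact hx (by omega) (hTB (hT.out haT hcT ⟨by omega, by omega⟩))

theorem Finset.card_le_card_biUnion_of_ordConnected {ι : Type*} {t : ι → Finset ℕ}
    (ht : ∀ i, (t i : Set ℕ).OrdConnected) (s : Finset ι)
    (hwin : ∀ a b, #{i ∈ s | t i ⊆ Icc a b} ≤ b + 1 - a) : #s ≤ #(s.biUnion t) := by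
  induction s using Finset.strongInduction with
  | H s ih =>
  rcases (s.biUnion t).eq_empty_or_nonempty with hB | hB
  · have hempty : ∀ i ∈ s, t i ⊆ Icc 1 0 := fun i hi => by
      simpa [hB] using subset_biUnion_of_mem t hi
    have := hwin 1 0
    rw [filter_true_of_mem hempty] at this
    omega
  -- Split off the top maximal run `[x, y]` of the union: each interval lies in it or misses it.
  set B := s.biUnion t
  set y := B.max' hB
  obtain ⟨x, hxy, hIcc, hgap⟩ := exists_maximal_Icc_subset_of_mem (B.max'_mem hB)
  have hsplit : ∀ i ∈ s, t i ⊆ Icc x y ∨ Disjoint (t i) (Icc x y) := fun i hi =>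
    subset_Icc_or_disjoint_of_ordConnected (ht i) (subset_biUnion_of_mem t hi) (B.le_max' ·) hgap
  set s₂ := {i ∈ s | ¬ t i ⊆ Icc x y}
  have hs₂ : s₂ ⊂ s := by
    obtain ⟨i, hi, hyi⟩ := mem_biUnion.1 (B.max'_mem hB)
    refine (filter_ssubset.2 ⟨i, hi, not_not.2 ?_⟩)
    exact (hsplit i hi).resolve_right (not_disjoint_iff.2 ⟨y, hyi, mem_Icc.2 ⟨hxy, le_rfl⟩⟩)
  have ih₂ := ih s₂ hs₂ fun a b =>
    (card_le_card (filter_subset_filter _ (filter_subset _ _))).trans (hwin a b)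
  have hdisj : Disjoint (s₂.biUnion t) (Icc x y) := (disjoint_biUnion_left _ _ _).2 fun i hi =>
    (hsplit i (mem_filter.1 hi).1).resolve_left (mem_filter.1 hi).2
  have hunion : s₂.biUnion t ∪ Icc x y ⊆ B :=
    union_subset (biUnion_subset_biUnion_of_subset_left t (filter_subset _ _)) hIcc
  have := card_le_card hunion
  rw [card_union_of_disjoint hdisj, Nat.card_Icc] at this
  have hcard : #{i ∈ s | t i ⊆ Icc x y} + #s₂ = #s := card_filter_add_card_filter_not _
  have := hwin x y
  omega

theorem Fin.bijOn_val_add_one (d : ℕ) :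
    Set.BijOn (fun j : Fin d => (j : ℤ) + 1) Set.univ (Set.Icc 1 (d : ℤ)) := by
  refine ⟨fun j _ => ?_, fun j _ j' _ h => Fin.ext (by simpa using h),
    fun z ⟨hz1, hzd⟩ => ?_⟩
  · have := j.isLt
    simp only [Set.mem_Icc]
    omega
  · exact ⟨⟨z.toNat - 1, by omega⟩, Set.mem_univ _, by simp only; omega⟩

/-- The `h ∈ ℕ` with `⌈d * h / n⌉ = j + 1`. -/
def ceilFiber (n d j : ℕ) : Finset ℕ := Icc (j * n / d + 1) ((j + 1) * n / d)

theorem ordConnected_ceilFiber (n d j : ℕ) : (ceilFiber n d j : Set ℕ).OrdConnected := by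
  rw [ceilFiber, coe_Icc]
  exact Set.ordConnected_Icc

section ceilFiber

variable {n d j h : ℕ}

theorem mem_ceilFiber (hd : 0 < d) :
    h ∈ ceilFiber n d j ↔ j * n < d * h ∧ d * h ≤ (j + 1) * n := by
  rw [ceilFiber, mem_Icc, Nat.add_one_le_iff, Nat.div_lt_iff_lt_mul hd, Nat.le_div_iff_mul_le hd,
    mul_comm h]

theorem ceil_eq_of_mem_ceilFiber (hd : 0 < d) (hh : h ∈ ceilFiber n d j) :
    ⌈(d * h : ℚ) / n⌉ = j + 1 := by
  obtain ⟨hlo, hhi⟩ := (mem_ceilFiber hd).1 hh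
  have hn : (0 : ℚ) < n := by
    exact_mod_cast Nat.pos_of_ne_zero fun h0 => by subst h0; simp at hlo hhi; omega
  have hlo' : (j : ℚ) * n < d * h := by exact_mod_cast hlo
  have hhi' : (d : ℚ) * h ≤ (j + 1) * n := by exact_mod_cast hhi
  rw [Int.ceil_eq_iff]
  push_cast
  rw [add_sub_cancel_right, lt_div_iff₀ hn, div_le_iff₀ hn]
  exact ⟨hlo', hhi'⟩

theorem ceilFiber_subset_Icc (hjd : j < d) : ceilFiber n d j ⊆ Icc 1 n := by
  intro h hh
  obtain ⟨hlo, hhi⟩ := (mem_ceilFiber (j.zero_le.trans_lt hjd)).1 hh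
  refine mem_Icc.2 ⟨Nat.pos_of_ne_zero ?_, ?_⟩
  · rintro rfl
    simp at hlo
  · by_contra! hnh
    nlinarith

theorem ceilFiber_nonempty (hd : 0 < d) (hdn : d ≤ n) : (ceilFiber n d j).Nonempty := by
  refine nonempty_Icc.2 (Nat.add_one_le_iff.2 ?_)
  calc j * n / d < j * n / d + 1 := Nat.lt_add_one _
    _ = (j * n + d) / d := (Nat.add_div_right _ hd).symm
    _ ≤ (j + 1) * n / d := Nat.div_le_div_right (by nlinarith)

theorem le_and_lt_of_ceilFiber_subset_Icc (hd : 0 < d) (hdn : d ≤ n) {a b : ℕ}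
    (hsub : ceilFiber n d j ⊆ Icc a b) : a * d ≤ j * n + d ∧ (j + 1) * n < (b + 1) * d := by
  obtain ⟨ha, hb⟩ := (Icc_subset_Icc_iff (nonempty_Icc.1 (ceilFiber_nonempty hd hdn))).1 hsub
  constructor
  · calc a * d ≤ (j * n / d + 1) * d := Nat.mul_le_mul_right d ha
      _ = j * n / d * d + d := add_one_mul _ _
      _ ≤ j * n + d := Nat.add_le_add_right (Nat.div_mul_le_self _ _) d
  · exact (Nat.div_lt_iff_lt_mul hd).1 (Nat.lt_add_one_of_le hb)

theorem card_mul_add_lt_of_forall_ceilFiber_subset (hd : 0 < d) (hdn : d ≤ n) {a b : ℕ}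
    (hab : a ≤ b) {J : Finset ℕ} (hJ : ∀ j ∈ J, ceilFiber n d j ⊆ Icc a b) :
    #J * n + a * d < (b + 2) * d := by
  rcases J.eq_empty_or_nonempty with rfl | hJne
  · simpa using Nat.mul_lt_mul_of_pos_right (by omega : a < b + 2) hd
  obtain ⟨hlo, -⟩ := le_and_lt_of_ceilFiber_subset_Icc hd hdn (hJ _ (J.min'_mem hJne))
  obtain ⟨-, hhi⟩ := le_and_lt_of_ceilFiber_subset_Icc hd hdn (hJ _ (J.max'_mem hJne))
  have hcard : #J + J.min' hJne ≤ J.max' hJne + 1 := by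
    have := card_le_card (t := Icc (J.min' hJne) (J.max' hJne))
      fun j hj => mem_Icc.2 ⟨J.min'_le j hj, J.le_max' j hj⟩
    rw [Nat.card_Icc] at this
    have := J.min'_le _ (J.max'_mem hJne)
    omega
  nlinarith [Nat.mul_le_mul_right n hcard]

end ceilFiber

theorem card_filter_ceilFiber_subset_Icc_le {u : ℕ} (ni : Fin u → ℕ) (hni : ∀ i, 0 < ni i)
    (n : ℕ) (hn : n = ∑ i, ni i) (a b : ℕ) :
    #{σ : Σ i, Fin (ni i) | ceilFiber n (ni σ.1) σ.2 ⊆ Icc a b} ≤ b + 1 - a := by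
  rcases eq_empty_or_nonempty {σ : Σ i, Fin (ni i) | ceilFiber n (ni σ.1) σ.2 ⊆ Icc a b}
    with hS | ⟨σ, hσ⟩
  · simp [hS]
  have hdn : ∀ i, ni i ≤ n := fun i =>
    hn ▸ single_le_sum (fun i _ => (ni i).zero_le) (mem_univ i)
  have hab : a ≤ b := by
    obtain ⟨h, hh⟩ := ceilFiber_nonempty (j := σ.2) (hni σ.1) (hdn σ.1)
    have := mem_Icc.1 ((mem_filter.1 hσ).2 hh)
    omega
  have hfiber : ∀ i, #{j : Fin (ni i) | ceilFiber n (ni i) j ⊆ Icc a b} * n + a * ni i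
      < (b + 2) * ni i := fun i => by
    simpa using card_mul_add_lt_of_forall_ceilFiber_subset (hni i) (hdn i) hab
      (J := (univ.filter fun j : Fin (ni i) => ceilFiber n (ni i) j ⊆ Icc a b).map
        Fin.valEmbedding) (by simp)
  have hsum := sum_lt_sum_of_nonempty ⟨σ.1, mem_univ _⟩ fun i _ => hfiber i
  rw [sum_add_distrib, ← sum_mul, ← mul_sum, ← mul_sum, ← hn, ← add_mul] at hsum
  rw [← univ_sigma_univ, filter_sigma, card_sigma]
  dsimp only
  have := Nat.lt_of_mul_lt_mul_right hsum
  omega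

theorem exists_slice_partition_general (u : ℕ) (ni : Fin u → ℕ)
    (hni : ∀ i, 0 < ni i) (n : ℕ) (hn : n = ∑ i, ni i) :
    ∃ H : Fin u → Finset ℕ,
      (∀ i, H i ⊆ Finset.Icc 1 n) ∧
      (∀ i j, i ≠ j → Disjoint (H i) (H j)) ∧
      (∀ x ∈ Finset.Icc 1 n, ∃ i, x ∈ H i) ∧
      (∀ i, (H i).card = ni i) ∧
      (∀ i, Set.BijOn (fun x : ℕ => ⌈(ni i * x : ℚ) / n⌉) ↑(H i)
        (Set.Icc 1 (ni i : ℤ))) := by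
  obtain ⟨f, hf, hft⟩ := (all_card_le_biUnion_card_iff_exists_injective
    fun σ : Σ i, Fin (ni i) => ceilFiber n (ni σ.1) σ.2).1 fun s =>
      card_le_card_biUnion_of_ordConnected (fun _ => ordConnected_ceilFiber ..) s fun a b =>
        (card_le_card (filter_subset_filter _ (subset_univ s))).trans
          (card_filter_ceilFiber_subset_Icc_le ni hni n hn a b)
  have hf_mem : ∀ σ, f σ ∈ Icc 1 n := fun σ => ceilFiber_subset_Icc σ.2.isLt (hft σ)
  have hf_range : univ.image f = Icc 1 n := by
    refine eq_of_subset_of_card_le (image_subset_iff.2 fun σ _ => hf_mem σ) ?_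
    rw [card_image_of_injective _ hf, card_univ, Fintype.card_sigma, Nat.card_Icc]
    simp [hn]
  have hf_slice : ∀ i, Function.Injective fun j : Fin (ni i) => f ⟨i, j⟩ :=
    fun i => hf.comp sigma_mk_injective
  refine ⟨fun i => univ.image fun j => f ⟨i, j⟩,
    fun i => image_subset_iff.2 fun j _ => hf_mem _, fun i i' hii' => ?_, fun x hx => ?_,
    fun i => ?_, fun i => ?_⟩
  · simp only [disjoint_left, mem_image]
    rintro _ ⟨j, -, rfl⟩ ⟨j', -, h⟩
    exact hii' (congrArg Sigma.fst (hf h)).symm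
  · obtain ⟨σ, -, rfl⟩ := mem_image.1 (hf_range ▸ hx)
    exact ⟨σ.1, mem_image_of_mem _ (mem_univ σ.2)⟩
  · simp [card_image_of_injective _ (hf_slice i)]
  · rw [coe_image, coe_univ, ← Set.bijOn_comp_iff (hf_slice i).injOn]
    convert Fin.bijOn_val_add_one (ni i) using 1
    funext j
    exact_mod_cast ceil_eq_of_mem_ceilFiber (hni i) (hft ⟨i, j⟩)

/-- Step 2 of the FSLHD construction: {1,...,n} can be partitioned into sets
H^1,...,H^u of sizes n_1,...,n_u on each of which h ↦ ⌈n_i·h/n⌉ is a bijection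
onto {1,...,n_i}. -/
theorem exists_slice_partition (u : ℕ) (hu : 0 < u) (ni : Fin u → ℕ)
    (hni : ∀ i, 0 < ni i) (n : ℕ) (hn : n = ∑ i, ni i) :
    ∃ H : Fin u → Finset ℕ,
      (∀ i, H i ⊆ Finset.Icc 1 n) ∧
      (∀ i j, i ≠ j → Disjoint (H i) (H j)) ∧
      (∀ x ∈ Finset.Icc 1 n, ∃ i, x ∈ H i) ∧
      (∀ i, (H i).card = ni i) ∧
      (∀ i, Set.BijOn (fun x : ℕ => ⌈(ni i * x : ℚ) / n⌉) ↑(H i)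
        (Set.Icc 1 (ni i : ℤ))) :=
  exists_slice_partition_general u ni hni n hn
end

section
/- Let X be an n×q real matrix with rows x_1,...,x_n, let r ≠ s be row indices, let k be a column index, and let m ∈ {1,2}. Let X' be the matrix obtained from X by exchanging the entries X_{r,k} and X_{s,k} and leaving all other entries unchanged, with rows x'_1,...,x'_n. Then for every row index v with v ≠ r and v ≠ s: ∑_{j=1}^{q} |x'_{r,j} − x'_{v,j}|^m = ∑_{j=1}^{q} |x_{r,j} − x_{v,j}|^m + (|X_{s,k} − X_{v,k}|^m − |X_{r,k} − X_{v,k}|^m), and ∑_{j=1}^{q} |x'_{s,j} − x'_{v,j}|^m = ∑_{j=1}^{q} |x_{s,j} − x_{v,j}|^m − (|X_{s,k} − X_{v,k}|^m − |X_{r,k} − X_{v,k}|^m). Moreover, for any two row indices v, w both different from r and s, ∑_{j=1}^{q} |x'_{v,j} − x'_{w,j}|^m = ∑_{j=1}^{q} |x_{v,j} − x_{w,j}|^m. -/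
theorem Fintype.sum_eq_sum_add_sub_of_eq_off {ι M : Type*} [Fintype ι] [AddCommGroup M]
    {f g : ι → M} (k : ι) (h : ∀ j ≠ k, f j = g j) :
    ∑ j, f j = ∑ j, g j + (f k - g k) := by
  rw [← sub_eq_iff_eq_add', ← Finset.sum_sub_distrib]
  exact Fintype.sum_eq_single k fun j hj => sub_eq_zero.2 (h j hj)

theorem exchange_update_distances_general (n q : ℕ) (X X' : Matrix (Fin n) (Fin q) ℝ)
    (r s : Fin n) (k : Fin q) (m : ℕ)
    (h1 : X' r k = X s k) (h2 : X' s k = X r k)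
    (h3 : ∀ i j, ¬(i = r ∧ j = k) → ¬(i = s ∧ j = k) → X' i j = X i j) :
    (∀ v, v ≠ r → v ≠ s →
      (∑ j, |X' r j - X' v j| ^ m =
        ∑ j, |X r j - X v j| ^ m + (|X s k - X v k| ^ m - |X r k - X v k| ^ m)) ∧
      (∑ j, |X' s j - X' v j| ^ m =
        ∑ j, |X s j - X v j| ^ m - (|X s k - X v k| ^ m - |X r k - X v k| ^ m))) ∧
    (∀ v w, v ≠ r → v ≠ s → w ≠ r → w ≠ s →
      ∑ j, |X' v j - X' w j| ^ m = ∑ j, |X v j - X w j| ^ m) := by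
  have hrow : ∀ v j, v ≠ r → v ≠ s → X' v j = X v j := fun v j hvr hvs =>
    h3 v j (by simp [hvr]) (by simp [hvs])
  have hcol : ∀ i j, j ≠ k → X' i j = X i j := fun i j hj =>
    h3 i j (by simp [hj]) (by simp [hj])
  refine ⟨fun v hvr hvs => ⟨?_, ?_⟩, fun v w hvr hvs hwr hws => ?_⟩
  · rw [Fintype.sum_eq_sum_add_sub_of_eq_off k fun j hj => by
      rw [hcol r j hj, hrow v j hvr hvs], h1, hrow v k hvr hvs]
  · rw [Fintype.sum_eq_sum_add_sub_of_eq_off k fun j hj => by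
      rw [hcol s j hj, hrow v j hvr hvs], h2, hrow v k hvr hvs]
    ring
  · exact Finset.sum_congr rfl fun j _ => by rw [hrow v j hvr hvs, hrow w j hwr hws]

/-- Updating formulas for the inter-site distances after exchanging two entries
within one column of a design matrix. -/
theorem exchange_update_distances (n q : ℕ) (X X' : Matrix (Fin n) (Fin q) ℝ)
    (r s : Fin n) (hrs : r ≠ s) (k : Fin q) (m : ℕ) (hm : m = 1 ∨ m = 2)
    (h1 : X' r k = X s k) (h2 : X' s k = X r k)
    (h3 : ∀ i j, ¬(i = r ∧ j = k) → ¬(i = s ∧ j = k) → X' i j = X i j) :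
    (∀ v, v ≠ r → v ≠ s →
      (∑ j, |X' r j - X' v j| ^ m =
        ∑ j, |X r j - X v j| ^ m + (|X s k - X v k| ^ m - |X r k - X v k| ^ m)) ∧
      (∑ j, |X' s j - X' v j| ^ m =
        ∑ j, |X s j - X v j| ^ m - (|X s k - X v k| ^ m - |X r k - X v k| ^ m))) ∧
    (∀ v w, v ≠ r → v ≠ s → w ≠ r → w ≠ s →
      ∑ j, |X' v j - X' w j| ^ m = ∑ j, |X v j - X w j| ^ m) :=
  exchange_update_distances_general n q X X' r s k m h1 h2 h3
end

section
/- Let u and n_1,...,n_u be positive integers, set n = n_1 + ··· + n_u, and let L be a positive common multiple of n_1,...,n_u and n. Suppose H^1,...,H^u are pairwise disjoint subsets of {1,...,n} whose union is {1,...,n}, with |H^i| = n_i, such that for each i the map h ↦ ⌈n_i·h/n⌉ is a bijection from H^i onto {1,...,n_i}. For each i, let h^i_1,...,h^i_{n_i} be any enumeration of H^i, let m^i_s = L·h^i_s/n, let ε^i_s be reals with 0 < ε^i_s < 1, and let d^i_s = (m^i_s − ε^i_s)/L. Then: (i) among all n values d^i_s (over all i and s), exactly one lies in each interval ((k−1)/n,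 k/n] for k = 1,...,n; and (ii) for each i, among the n_i values d^i_1,...,d^i_{n_i}, exactly one lies in each interval ((k−1)/n_i, k/n_i] for k = 1,...,n_i. -/
private lemma aux_lt (a b : ℕ) (ε : ℝ) (h0 : 0 < ε) (h1 : ε < 1) :
    (a:ℝ) < (b:ℝ) - ε ↔ a < b := by
  constructor
  · intro hlt
    have : (a:ℝ) < b := by linarith
    exact_mod_cast this
  · intro hlt
    have : (a:ℝ) + 1 ≤ b := by exact_mod_cast hlt
    linarith

private lemma aux_le (a b : ℕ) (ε : ℝ) (h0 : 0 < ε) (h1 : ε < 1) :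
    (b:ℝ) - ε ≤ a ↔ b ≤ a := by
  constructor
  · intro hle
    have h2 : (b:ℝ) < a + 1 := by linarith
    have h3 : b < a + 1 := by exact_mod_cast h2
    omega
  · intro hle
    have : (b:ℝ) ≤ a := by exact_mod_cast hle
    linarith

private lemma aux_cmp (m c b k : ℕ) (hm : 0 < m) (hc : 0 < c)
    (ε : ℝ) (h0 : 0 < ε) (h1 : ε < 1) :
    ((k:ℝ)/m < ((b:ℝ) - ε)/((m:ℝ)*c) ↔ k*c < b) ∧
    (((b:ℝ) - ε)/((m:ℝ)*c) ≤ (k:ℝ)/m ↔ b ≤ k*c) := by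
  have hm' : (0:ℝ) < m := by exact_mod_cast hm
  have hc' : (0:ℝ) < c := by exact_mod_cast hc
  have hmc : (0:ℝ) < (m:ℝ)*c := by positivity
  have e : (k:ℝ)/m = ((k*c : ℕ):ℝ)/((m:ℝ)*c) := by
    push_cast
    rw [mul_div_mul_right _ _ (ne_of_gt hc')]
  rw [e, div_lt_div_iff_of_pos_right hmc, div_le_div_iff_of_pos_right hmc]
  exact ⟨aux_lt _ _ _ h0 h1, aux_le _ _ _ h0 h1⟩

/-- Theorem 1 in full: each column of the FSLHD construction is a Latin
hypercube column both as a whole and slice by slice. -/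
theorem fslhd_column_is_sliced_lhd (u : ℕ) (hu : 0 < u) (ni : Fin u → ℕ)
    (hni : ∀ i, 0 < ni i) (n : ℕ) (hn : n = ∑ i, ni i)
    (L : ℕ) (hL : 0 < L) (hdvd : n ∣ L) (hdvdi : ∀ i, ni i ∣ L)
    (H : Fin u → Finset ℕ)
    (hsub : ∀ i, H i ⊆ Finset.Icc 1 n)
    (hdisj : ∀ i j, i ≠ j → Disjoint (H i) (H j))
    (hcover : ∀ x ∈ Finset.Icc 1 n, ∃ i, x ∈ H i)
    (hcard : ∀ i, (H i).card = ni i)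
    (hbij : ∀ i, Set.BijOn (fun x : ℕ => ⌈(ni i * x : ℚ) / n⌉) ↑(H i)
      (Set.Icc 1 (ni i : ℤ)))
    (h : (i : Fin u) → Fin (ni i) → ℕ)
    (hinj : ∀ i, Function.Injective (h i))
    (hmem : ∀ i s, h i s ∈ H i)
    (hsurj : ∀ i, ∀ x ∈ H i, ∃ s, h i s = x)
    (ε : (i : Fin u) → Fin (ni i) → ℝ)
    (hε : ∀ i s, 0 < ε i s ∧ ε i s < 1)
    (d : (i : Fin u) → Fin (ni i) → ℝ)
    (hd : ∀ i s, d i s = ((L : ℝ) * (h i s : ℝ) / n - ε i s) / L) :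
    (∀ k ∈ Finset.Icc 1 n, ∃! p : Σ i, Fin (ni i),
      ((k : ℝ) - 1) / n < d p.1 p.2 ∧ d p.1 p.2 ≤ (k : ℝ) / n) ∧
    (∀ i, ∀ k ∈ Finset.Icc 1 (ni i), ∃! s : Fin (ni i),
      ((k : ℝ) - 1) / (ni i) < d i s ∧ d i s ≤ (k : ℝ) / (ni i)) := by
  have hnpos : 0 < n := by
    subst hn
    exact Finset.sum_pos (fun i _ => hni i) ⟨⟨0, hu⟩, Finset.mem_univ _⟩
  obtain ⟨C, hC⟩ := hdvd
  have hCpos : 0 < C := by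
    rcases Nat.eq_zero_or_pos C with h0 | h0
    · subst h0; simp at hC; omega
    · exact h0
  have hn0 : (n:ℝ) ≠ 0 := Nat.cast_ne_zero.mpr hnpos.ne'
  -- rewrite d in the form used by aux_cmp
  have hd2 : ∀ i s, d i s = (((C * h i s : ℕ):ℝ) - ε i s) / ((n:ℝ) * C) := by
    intro i s
    rw [hd i s, show (L:ℝ) = (n:ℝ) * C from by exact_mod_cast hC]
    push_cast
    congr 1
    field_simp
  -- the condition for the whole design: d lands in interval k iff h i s = k
  have cond1 : ∀ (i : Fin u) (s : Fin (ni i)) (k : ℕ), 1 ≤ k →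
      ((((k:ℝ) - 1)/n < d i s ∧ d i s ≤ (k:ℝ)/n) ↔ h i s = k) := by
    intro i s k hk
    obtain ⟨hε1, hε2⟩ := hε i s
    have A := (aux_cmp n C (C * h i s) (k-1) hnpos hCpos (ε i s) hε1 hε2).1
    have B := (aux_cmp n C (C * h i s) k hnpos hCpos (ε i s) hε1 hε2).2
    have hk' : ((k:ℝ) - 1) = ((k-1 : ℕ):ℝ) := by
      rw [Nat.cast_sub hk]; norm_num
    rw [hd2 i s, hk', A, B]
    constructor
    · rintro ⟨h1, h2⟩
      rw [mul_comm C (h i s)] at h1 h2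
      have h1' : k - 1 < h i s := lt_of_mul_lt_mul_right h1 (Nat.zero_le C)
      have h2' : h i s ≤ k := le_of_mul_le_mul_right h2 hCpos
      omega
    · rintro rfl
      constructor
      · rw [mul_comm C (h i s)]
        exact (Nat.mul_lt_mul_right hCpos).mpr (by omega)
      · rw [mul_comm C (h i s)]
  obtain ⟨part1, rest⟩ : (∀ k ∈ Finset.Icc 1 n, ∃! p : Σ i, Fin (ni i),
      ((k : ℝ) - 1) / n < d p.1 p.2 ∧ d p.1 p.2 ≤ (k : ℝ) / n) ∧ True := by
    refine ⟨?_, trivial⟩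
    intro k hk
    rw [Finset.mem_Icc] at hk
    obtain ⟨i, hki⟩ := hcover k (Finset.mem_Icc.mpr hk)
    obtain ⟨s, hs⟩ := hsurj i k hki
    refine ⟨⟨i, s⟩, (cond1 i s k hk.1).mpr hs, ?_⟩
    rintro ⟨j, t⟩ hq
    have hjt : h j t = k := (cond1 j t k hk.1).mp hq
    have hji : j = i := by
      by_contra hne
      exact Finset.disjoint_left.mp (hdisj j i hne) (hjt ▸ hmem j t) hki
    subst hji
    have : t = s := hinj j (by rw [hjt, hs])
    rw [this]
  refine ⟨part1, ?_⟩
  -- part (ii)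
  intro i k hk
  rw [Finset.mem_Icc] at hk
  obtain ⟨Ci, hCi⟩ := hdvdi i
  have hCipos : 0 < Ci := by
    rcases Nat.eq_zero_or_pos Ci with h0 | h0
    · subst h0; simp at hCi; omega
    · exact h0
  have hnipos := hni i
  have hni0 : ((ni i : ℚ)) ≠ 0 := Nat.cast_ne_zero.mpr hnipos.ne'
  have hd3 : ∀ s, d i s = (((C * h i s : ℕ):ℝ) - ε i s) / ((ni i:ℝ) * Ci) := by
    intro s
    rw [hd2 i s]
    congr 1
    have : ((n:ℝ) * C) = ((L:ℕ):ℝ) := by exact_mod_cast hC.symm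
    rw [this]
    exact_mod_cast hCi
  -- bridges between multiplied inequalities
  have hposmul : 0 < n * ni i := Nat.mul_pos hnpos hnipos
  have bridge_lt : ∀ a b : ℕ, (a * Ci < C * b ↔ a * n < ni i * b) := by
    intro a b
    rw [show (a * Ci < C * b) ↔ ((a * Ci) * (n * ni i) < (C * b) * (n * ni i)) from
          (Nat.mul_lt_mul_right hposmul).symm,
        show a * Ci * (n * ni i) = (a * n) * L from by rw [hCi]; ring,
        show C * b * (n * ni i) = (ni i * b) * L from by rw [hC]; ring,
        Nat.mul_lt_mul_right hL]
  have bridge_le : ∀ a b : ℕ, (C * b ≤ a * Ci ↔ ni i * b ≤ a * n) := by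
    intro a b
    rw [← not_lt, bridge_lt a b, not_lt]
  -- condition for slice i: d lands in interval k iff ceiling equals k
  have cond2 : ∀ (s : Fin (ni i)),
      ((((k:ℝ) - 1)/(ni i) < d i s ∧ d i s ≤ (k:ℝ)/(ni i)) ↔
        ⌈(ni i * (h i s) : ℚ) / n⌉ = (k:ℤ)) := by
    intro s
    obtain ⟨hε1, hε2⟩ := hε i s
    have A := (aux_cmp (ni i) Ci (C * h i s) (k-1) hnipos hCipos (ε i s) hε1 hε2).1
    have B := (aux_cmp (ni i) Ci (C * h i s) k hnipos hCipos (ε i s) hε1 hε2).2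
    have hk' : ((k:ℝ) - 1) = ((k-1 : ℕ):ℝ) := by
      rw [Nat.cast_sub hk.1]; norm_num
    rw [hd3 s, hk', A, B, bridge_lt, bridge_le]
    rw [Int.ceil_eq_iff]
    have hnq : (0:ℚ) < (n:ℚ) := by exact_mod_cast hnpos
    rw [lt_div_iff₀ hnq, div_le_iff₀ hnq]
    have ek : (((k:ℤ)):ℚ) - 1 = ((k-1 : ℕ):ℚ) := by
      rw [Nat.cast_sub hk.1]; push_cast; ring
    rw [ek]
    constructor
    · rintro ⟨h1, h2⟩
      exact ⟨by exact_mod_cast h1, by exact_mod_cast h2⟩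
    · rintro ⟨h1, h2⟩
      exact ⟨by exact_mod_cast h1, by exact_mod_cast h2⟩
  -- existence via surjectivity of the ceiling map
  have hkz : (k:ℤ) ∈ Set.Icc 1 (ni i : ℤ) := by
    constructor <;> [exact_mod_cast hk.1; exact_mod_cast hk.2]
  obtain ⟨x, hxH, hxk⟩ := (hbij i).2.2 hkz
  obtain ⟨s, hs⟩ := hsurj i x hxH
  have hsk : ⌈(ni i * (h i s) : ℚ) / n⌉ = (k:ℤ) := by rw [hs]; exact hxk
  refine ⟨s, (cond2 s).mpr hsk, ?_⟩
  intro t ht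
  have htk := (cond2 t).mp ht
  have : h i t = h i s := (hbij i).2.1 (hmem i t) (hmem i s)
    (show ⌈(ni i * (h i t) : ℚ) / n⌉ = ⌈(ni i * (h i s) : ℚ) / n⌉ by rw [htk, hsk])
  exact hinj i this
end
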